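/- arXiv:2105.00496 — 4 statements merged into one kernel-verified Lean document; each statement's English description precedes it below -/
import Mathlib

section
/- Let a be the minimum letter of a totally ordered alphabet A, and x a finite singular word over A with at least two occurrences of a. Then a is separating for x (occurs in every length-2 factor) if and only if |x|_a ≥ (sum over a' ≠ a of |x|_{a'}) + 1; moreover aa is a factor of x if and only if this inequality is strict. -/
/-!
A singular word `x` with two `a`s begins with `a`: otherwise `x = (b ⋯ a) w` with `b ≠ a` and
`w` nonempty, and singularity applied to `v = b ⋯ a`, `u = []` forces `b < a`. By reversal it
also ends with `a`. In the same way the factors `aa` and `bc` with `b, c ≠ a` cannot both occur: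
the factor `v = a ⋯ b` between them has `a < b` on one side and `c < a` on the other.

For a word beginning and ending with `a`, counting adjacent pairs gives
`#aa + |x| + 1 = #bc + 2 |x|_a`, where `#bc` counts pairs of letters different from `a`.
Now `a` is separating iff `#bc = 0`, and at most one of `#aa`, `#bc` is nonzero.
-/

/-- Lexicographic order on finite words with the convention that
`u < v` whenever `v` is a proper prefix of `u`. -/
def Wlt {A : Type*} [LinearOrder A] : List A → List A → Prop
  | [], _ => False
  | _ :: _, [] => True
  | a :: u, b :: v => a < b ∨ (a = b ∧ Wlt u v)

/-- A finite word is singular if every factorization `x = reverse u ++ v ++ w`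
with `v` nonempty, `v ≠ reverse v`, `u ≠ w` satisfies `v < v̄ ↔ w < u`. -/
def Singular {A : Type*} [LinearOrder A] (x : List A) : Prop :=
  ∀ u v w : List A, x = u.reverse ++ v ++ w → v ≠ [] → v ≠ v.reverse → u ≠ w →
    (Wlt v v.reverse ↔ Wlt w u)

section Wlt

variable {A : Type*} [LinearOrder A]

theorem wlt_cons_cons {a b : A} {u v : List A} :
    Wlt (a :: u) (b :: v) ↔ a < b ∨ (a = b ∧ Wlt u v) :=
  Iff.rfl

theorem wlt_asymm : ∀ {u v : List A}, Wlt u v → ¬ Wlt v u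
  | _ :: _, _ :: _, .inl hab, .inl hba => hab.asymm hba
  | _ :: _, _ :: _, .inl hab, .inr ⟨hba, _⟩ => hab.ne hba.symm
  | _ :: _, _ :: _, .inr ⟨hab, _⟩, .inl hba => hba.ne hab.symm
  | _ :: _, _ :: _, .inr ⟨_, huv⟩, .inr ⟨_, hvu⟩ => wlt_asymm huv hvu

theorem wlt_trichotomous : ∀ u v : List A, Wlt u v ∨ u = v ∨ Wlt v u
  | [], [] => .inr (.inl rfl)
  | [], _ :: _ => .inr (.inr trivial)
  | _ :: _, [] => .inl trivial
  | a :: u, b :: v => by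
    rcases lt_trichotomy a b with hab | rfl | hba
    · exact .inl (.inl hab)
    · rcases wlt_trichotomous u v with huv | rfl | hvu
      · exact .inl (.inr ⟨rfl, huv⟩)
      · exact .inr (.inl rfl)
      · exact .inr (.inr (.inr ⟨rfl, hvu⟩))
    · exact .inr (.inr (.inl hba))

theorem wlt_iff_not_wlt {u v : List A} (huv : u ≠ v) : Wlt u v ↔ ¬ Wlt v u :=
  ⟨wlt_asymm, fun hvu => (wlt_trichotomous u v).resolve_right (not_or.2 ⟨huv, hvu⟩)⟩

end Wlt

namespace List

variable {α : Type*}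

theorem pair_infix_iff_mem_zip_tail {b c : α} :
    ∀ {x : List α}, [b, c] <:+: x ↔ (b, c) ∈ x.zip x.tail
  | [] => by simp
  | [d] => by simp [infix_cons_iff]
  | d :: e :: t => by
    rw [infix_cons_iff, pair_infix_iff_mem_zip_tail]
    simp [and_comm]

theorem countP_zip_tail_pos_iff {x : List α} {r : α → α → Bool} :
    0 < (x.zip x.tail).countP (fun q => r q.1 q.2) ↔ ∃ b c, [b, c] <:+: x ∧ r b c := by
  simp [countP_pos_iff, pair_infix_iff_mem_zip_tail]

/-- Each step along the word changes `#(¬p) - #p + #(p p) - #(¬p ¬p)` by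
`[p next] - [p current]`, so the sum telescopes. -/
theorem countP_zip_tail_balance (p : α → Bool) : ∀ {x : List α}, x ≠ [] →
    (x.zip x.tail).countP (fun q => p q.1 && p q.2) + x.countP (fun c => !p c) +
        (x.head?.any p).toNat + (x.getLast?.any p).toNat =
      (x.zip x.tail).countP (fun q => !p q.1 && !p q.2) + x.countP p + 1
  | [c], _ => by cases h : p c <;> simp [h]
  | c :: d :: t, _ => by
    have ih := countP_zip_tail_balance p (x := d :: t) (by simp)
    simp only [zip_cons_cons, tail_cons, countP_cons, head?_cons, getLast?_cons_cons,
      Option.any_some] at ih ⊢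
    cases hc : p c <;> cases hd : p d <;> simp_all <;> omega

variable [DecidableEq α] {a : α} {x : List α}

theorem countP_zip_tail_balance_of_head?_of_getLast? (hhead : x.head? = some a)
    (hlast : x.getLast? = some a) :
    (x.zip x.tail).countP (fun q => q.1 == a && q.2 == a) + x.length + 1 =
      (x.zip x.tail).countP (fun q => !(q.1 == a) && !(q.2 == a)) + 2 * x.count a := by
  have hbalance := countP_zip_tail_balance (· == a) (x := x) (by rintro rfl; simp at hhead)
  have hlength := length_eq_countP_add_countP (· == a) (l := x)
  simp only [hhead, hlast, Option.any_some, beq_self_eq_true, Bool.toNat_true, decide_not,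
    Bool.decide_eq_true, ← count_eq_countP] at hbalance hlength
  omega

theorem aa_infix_iff_countP_zip_tail_pos :
    [a, a] <:+: x ↔ 0 < (x.zip x.tail).countP (fun q => q.1 == a && q.2 == a) := by
  rw [countP_zip_tail_pos_iff (r := fun b c => b == a && c == a)]
  simp

theorem forall_infix_length_two_mem_iff_countP_zip_tail_eq_zero :
    (∀ u : List α, u <:+: x → u.length = 2 → a ∈ u) ↔
      (x.zip x.tail).countP (fun q => !(q.1 == a) && !(q.2 == a)) = 0 := by
  rw [← Nat.le_zero, ← not_lt,
    countP_zip_tail_pos_iff (r := fun b c => !(b == a) && !(c == a))]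
  refine ⟨fun h ⟨b, c, hbc, hne⟩ => ?_, fun h u hu hlen => ?_⟩
  · have hmem := h [b, c] hbc rfl
    simp only [mem_cons, not_mem_nil, or_false] at hmem
    rcases hmem with rfl | rfl <;> simp at hne
  · obtain ⟨b, c, rfl⟩ := length_eq_two.1 hlen
    by_contra hnot
    simp only [mem_cons, not_mem_nil, or_false, not_or] at hnot
    exact h ⟨b, c, hu, by simp [Ne.symm hnot.1, Ne.symm hnot.2]⟩

theorem exists_eq_append_cons_ne_nil_of_two_le_count (hx : 2 ≤ x.count a) :
    ∃ s w, x = s ++ a :: w ∧ w ≠ [] := by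
  have hx0 : x ≠ [] := by rintro rfl; simp at hx
  have hsplit := dropLast_append_getLast hx0
  have hmem : a ∈ x.dropLast := by
    rw [← count_pos_iff]
    have := congrArg (count a) hsplit
    rw [count_append, count_singleton] at this
    split_ifs at this <;> omega
  obtain ⟨s, t, hst⟩ := append_of_mem hmem
  refine ⟨s, t ++ [x.getLast hx0], ?_, by simp⟩
  conv_lhs => rw [← hsplit, hst]
  simp

end List

section Singular

variable {A : Type*} [LinearOrder A] {x : List A}

theorem Singular.reverse (hx : Singular x) : Singular x.reverse := by
  intro u v w hxr hv hvv huw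
  have h := hx w v.reverse u (by simpa using congrArg List.reverse hxr)
    (by simpa using hv) (by simpa using hvv.symm) huw.symm
  rw [List.reverse_reverse] at h
  rw [wlt_iff_not_wlt hvv, wlt_iff_not_wlt huw.symm, h]

theorem Singular.lt_iff_wlt (hx : Singular x) {u m w : List A} {b c : A}
    (hxv : x = u.reverse ++ (b :: m ++ [c]) ++ w) (hbc : b ≠ c) (huw : u ≠ w) :
    b < c ↔ Wlt w u := by
  have hrev : (b :: m ++ [c]).reverse = c :: (m.reverse ++ [b]) := by simp
  have hne : b :: m ++ [c] ≠ (b :: m ++ [c]).reverse := by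
    rw [hrev]; exact fun h => hbc (List.cons.inj h).1
  rw [← hx u _ w hxv (by simp) hne huw, hrev, List.cons_append, wlt_cons_cons]
  exact ⟨.inl, fun h => h.resolve_right fun h' => hbc h'.1⟩

variable {a : A}

theorem Singular.head?_eq (hx : Singular x) (ha : ∀ e, a ≤ e) (hcount : 2 ≤ x.count a) :
    x.head? = some a := by
  obtain _ | ⟨b, y⟩ := x
  · simp at hcount
  by_cases hba : b = a
  · simp [hba]
  rw [List.count_cons_of_ne hba] at hcount
  obtain ⟨s, w, rfl, hw⟩ := List.exists_eq_append_cons_ne_nil_of_two_le_count hcount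
  have hlt := (hx.lt_iff_wlt (u := []) (m := s) (w := w) (by simp) hba hw.symm).2
  obtain ⟨w0, w, rfl⟩ := List.exists_cons_of_ne_nil hw
  exact absurd (hlt trivial) (ha b).not_gt

theorem Singular.getLast?_eq (hx : Singular x) (ha : ∀ e, a ≤ e) (hcount : 2 ≤ x.count a) :
    x.getLast? = some a := by
  rw [← List.head?_reverse]
  exact hx.reverse.head?_eq ha (by rwa [List.count_reverse])

theorem Singular.ne_aa_append_pair (hx : Singular x) (ha : ∀ e, a ≤ e) {b c : A}
    (hb : b ≠ a) (hc : c ≠ a) (p m s : List A) :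
    x ≠ p ++ a :: a :: m ++ b :: c :: s := by
  intro hxe
  have hlt := hx.lt_iff_wlt (u := a :: p.reverse) (m := m) (w := c :: s) (by simp [hxe])
    hb.symm (by simp [Ne.symm hc])
  rcases hlt.1 ((ha b).lt_of_ne hb.symm) with hca | ⟨hca, -⟩
  · exact (ha c).not_gt hca
  · exact hc hca

theorem Singular.not_aa_infix_of_pair_infix (hx : Singular x) (ha : ∀ e, a ≤ e) {b c : A}
    (hb : b ≠ a) (hc : c ≠ a) (hbc : [b, c] <:+: x) : ¬ [a, a] <:+: x := by
  rintro ⟨p, q, rfl⟩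
  obtain ⟨r, s, hrs⟩ := hbc
  rcases List.append_eq_append_iff.1 (by simpa using hrs) with ⟨m, rfl, hm⟩ | ⟨m, rfl, hm⟩
  · rcases m with _ | ⟨m0, _ | ⟨m1, m⟩⟩ <;> simp at hm
    · exact hb hm.1
    · exact hc hm.2.1
    · obtain ⟨rfl, rfl, rfl⟩ := hm
      exact hx.reverse.ne_aa_append_pair ha hc hb q.reverse m.reverse r.reverse (by simp)
  · rcases m with _ | ⟨m0, _ | ⟨m1, m⟩⟩ <;> simp at hm
    · exact hb hm.1.symm
    · exact hb hm.2.1.symm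
    · obtain ⟨rfl, rfl, rfl⟩ := hm
      exact hx.ne_aa_append_pair ha hb hc p m s (by simp)

end Singular

theorem singular_min_separating_iff {A : Type*} [LinearOrder A] (a : A)
    (ha : ∀ e : A, a ≤ e) (x : List A) (hsing : Singular x) (hcount : 2 ≤ x.count a) :
    ((∀ u : List A, u <:+: x → u.length = 2 → a ∈ u) ↔
      (x.length - x.count a) + 1 ≤ x.count a) ∧
    ([a, a] <:+: x ↔ (x.length - x.count a) + 1 < x.count a) := by
  have hbalance := List.countP_zip_tail_balance_of_head?_of_getLast?
    (hsing.head?_eq ha hcount) (hsing.getLast?_eq ha hcount)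
  have hexcl : ¬ ((∃ b c, [b, c] <:+: x ∧ (!(b == a) && !(c == a))) ∧ [a, a] <:+: x) := by
    rintro ⟨⟨b, c, hbc, hb_hc⟩, haa⟩
    simp only [Bool.and_eq_true, Bool.not_eq_true', beq_eq_false_iff_ne] at hb_hc
    exact hsing.not_aa_infix_of_pair_infix ha hb_hc.1 hb_hc.2 hbc haa
  rw [← List.countP_zip_tail_pos_iff (r := fun b c => !(b == a) && !(c == a)),
    List.aa_infix_iff_countP_zip_tail_pos] at hexcl
  rw [List.forall_infix_length_two_mem_iff_countP_zip_tail_eq_zero,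
    List.aa_infix_iff_countP_zip_tail_pos]
  omega
end

section
/- Let c be the maximum letter of a totally ordered alphabet A. For finite words x, y over A: x < y if and only if λ_c(x) < λ_c(y), where λ_c is the morphism sending c to c and every other letter d' to c d'. -/
/-- The morphism `λ_d` sending `d ↦ d` and `d' ↦ d d'` for `d' ≠ d`. -/
def lamM {A : Type*} [DecidableEq A] (d : A) (x : List A) : List A :=
  (x.map (fun e => if e = d then [d] else [d, e])).flatten

/-- The morphism `ρ_d` sending `d ↦ d` and `d' ↦ d' d` for `d' ≠ d`. -/
def rhoM {A : Type*} [DecidableEq A] (d : A) (x : List A) : List A :=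
  (x.map (fun e => if e = d then [d] else [e, d])).flatten

lemma lamM_head {A : Type*} [DecidableEq A] (c : A) (u : List A) :
    lamM c u = [] ∨ ∃ t, lamM c u = c :: t := by
  cases u with
  | nil => left; rfl
  | cons a u =>
    right
    by_cases h : a = c <;> simp [lamM, h]

lemma lamM_cons {A : Type*} [DecidableEq A] (c a : A) (u : List A) :
    lamM c (a :: u) = (if a = c then [c] else [c, a]) ++ lamM c u := by
  simp [lamM]

theorem wlt_iff_lamM_max {A : Type*} [LinearOrder A] (c : A) (hc : ∀ e : A, e ≤ c)
    (x y : List A) : Wlt x y ↔ Wlt (lamM c x) (lamM c y) := by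
  induction x generalizing y with
  | nil => simp [Wlt, lamM]
  | cons a u ih =>
    cases y with
    | nil =>
      show Wlt (a :: u) [] ↔ Wlt (lamM c (a :: u)) (lamM c [])
      rw [lamM_cons]
      by_cases h : a = c <;> simp [h, Wlt, lamM]
    | cons b v =>
      rw [lamM_cons, lamM_cons]
      by_cases ha : a = c <;> by_cases hb : b = c
      · rw [if_pos ha, if_pos hb]
        simp only [List.cons_append, List.nil_append, Wlt, ha, hb, lt_irrefl,
          false_or, true_and, ih v]
      · rw [if_pos ha, if_neg hb]
        have hbc : b < c := lt_of_le_of_ne (hc b) hb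
        simp only [List.cons_append, List.nil_append, Wlt, ha, lt_irrefl,
          false_or, true_and]
        constructor
        · rintro (h | ⟨h, -⟩)
          · exact absurd h (not_lt.mpr hbc.le)
          · exact absurd h.symm hb
        · intro h
          exfalso
          rcases lamM_head c u with h' | ⟨t, h'⟩ <;> rw [h'] at h <;>
            simp only [Wlt] at h
          rcases h with h | ⟨h, -⟩
          · exact absurd h (not_lt.mpr hbc.le)
          · exact hb h.symm
      · rw [if_neg ha, if_pos hb]
        have hac : a < c := lt_of_le_of_ne (hc a) ha
        simp only [List.cons_append, List.nil_append, Wlt, hb, lt_irrefl,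
          false_or, true_and]
        constructor
        · intro _
          rcases lamM_head c v with h' | ⟨t, h'⟩ <;> rw [h'] <;>
            simp [Wlt, hac]
        · intro _
          left; exact hac
      · rw [if_neg ha, if_neg hb]
        simp only [List.cons_append, List.nil_append, Wlt, lt_irrefl,
          false_or, true_and, ih v]
end

section
/- Over the ordered alphabet {a < b < c}: if x is a finite singular word with |x|_a = |x|_c + 1, then x or its reversal equals a b^n (ca)^m for some n, m ≥ 0. -/
namespace SingularAux

section Generic
variable {A : Type*} [LinearOrder A]

lemma wlt_nil_left (v : List A) : ¬ Wlt [] v := by simp [Wlt]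

lemma wlt_cons_nil (a : A) (u : List A) : Wlt (a :: u) [] := by simp [Wlt]

lemma wlt_cons_cons {a b : A} {u v : List A} :
    Wlt (a :: u) (b :: v) ↔ a < b ∨ (a = b ∧ Wlt u v) := Iff.rfl

lemma wlt_asymm : ∀ u v : List A, Wlt u v → Wlt v u → False := by
  intro u
  induction u with
  | nil => intro v h; exact (wlt_nil_left v h).elim
  | cons a u ih =>
    intro v h1 h2
    cases v with
    | nil => exact wlt_nil_left _ h2
    | cons b v =>
      rcases wlt_cons_cons.1 h1 with h | ⟨rfl, h⟩
      · rcases wlt_cons_cons.1 h2 with h' | ⟨rfl, h'⟩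
        · exact absurd h' (lt_asymm h)
        · exact absurd h (lt_irrefl _)
      · rcases wlt_cons_cons.1 h2 with h' | ⟨-, h'⟩
        · exact absurd h' (lt_irrefl _)
        · exact ih v h h'

lemma wlt_total : ∀ u v : List A, u = v ∨ Wlt u v ∨ Wlt v u := by
  intro u
  induction u with
  | nil =>
    intro v
    cases v with
    | nil => exact Or.inl rfl
    | cons b v => exact Or.inr (Or.inr (wlt_cons_nil b v))
  | cons a u ih =>
    intro v
    cases v with
    | nil => exact Or.inr (Or.inl (wlt_cons_nil a u))
    | cons b v =>
      rcases lt_trichotomy a b with h | rfl | h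
      · exact Or.inr (Or.inl (wlt_cons_cons.2 (Or.inl h)))
      · rcases ih v with rfl | h | h
        · exact Or.inl rfl
        · exact Or.inr (Or.inl (wlt_cons_cons.2 (Or.inr ⟨rfl, h⟩)))
        · exact Or.inr (Or.inr (wlt_cons_cons.2 (Or.inr ⟨rfl, h⟩)))
      · exact Or.inr (Or.inr (wlt_cons_cons.2 (Or.inl h)))

omit [LinearOrder A] in
lemma vrev (d e : A) (m : List A) :
    (d :: (m ++ [e])).reverse = e :: (m.reverse ++ [d]) := by simp

/-- key lemma, `d < e` version -/
lemma keyLT {x l m r : List A} {d e : A} (hs : Singular x)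
    (hx : x = l ++ [d] ++ m ++ [e] ++ r) (hde : d < e) :
    r = l.reverse ∨ Wlt r l.reverse := by
  by_cases huw : l.reverse = r
  · exact Or.inl huw.symm
  · right
    have hxx : x = l.reverse.reverse ++ (d :: (m ++ [e])) ++ r := by
      simp [hx]
    have hne : (d :: (m ++ [e])) ≠ (d :: (m ++ [e])).reverse := by
      rw [vrev]; intro h; exact absurd (List.head_eq_of_cons_eq h) (ne_of_lt hde)
    have := hs l.reverse (d :: (m ++ [e])) r hxx (by simp) hne huw
    rw [vrev] at this
    exact this.1 (wlt_cons_cons.2 (Or.inl hde))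

/-- key lemma, `e < d` version -/
lemma keyGT {x l m r : List A} {d e : A} (hs : Singular x)
    (hx : x = l ++ [d] ++ m ++ [e] ++ r) (hde : e < d) :
    l.reverse = r ∨ Wlt l.reverse r := by
  by_cases huw : l.reverse = r
  · exact Or.inl huw
  · have hxx : x = l.reverse.reverse ++ (d :: (m ++ [e])) ++ r := by
      simp [hx]
    have hne : (d :: (m ++ [e])) ≠ (d :: (m ++ [e])).reverse := by
      rw [vrev]; intro h; exact absurd (List.head_eq_of_cons_eq h) (ne_of_gt hde)
    have h2 := hs l.reverse (d :: (m ++ [e])) r hxx (by simp) hne huw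
    rw [vrev] at h2
    have hnv : ¬ Wlt (d :: (m ++ [e])) (e :: (m.reverse ++ [d])) := by
      rw [wlt_cons_cons]
      rintro (h | ⟨rfl, -⟩)
      · exact absurd h (not_lt_of_gt hde)
      · exact absurd hde (lt_irrefl _)
    have : ¬ Wlt r l.reverse := fun hr => hnv (h2.2 hr)
    rcases wlt_total l.reverse r with h | h | h
    · exact Or.inl h
    · exact Or.inr h
    · exact absurd h this

lemma singular_reverse {x : List A} (hs : Singular x) : Singular x.reverse := by
  intro u v w hx hv hvr huw
  have hx' : x = w.reverse ++ v.reverse ++ u := by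
    have := congrArg List.reverse hx
    simpa [List.reverse_append, List.append_assoc] using this
  have h := hs w v.reverse u hx' (by simpa using hv)
      (by simpa using (Ne.symm hvr)) (Ne.symm huw)
  rw [List.reverse_reverse] at h
  constructor
  · intro h1
    have hnv : ¬ Wlt v.reverse v := fun hh => wlt_asymm _ _ h1 hh
    have hnu : ¬ Wlt u w := fun hh => hnv (h.2 hh)
    rcases wlt_total w u with rfl | h2 | h2
    · exact absurd rfl huw.symm
    · exact h2
    · exact absurd h2 hnu
  · intro h1
    have hnu : ¬ Wlt u w := fun hh => wlt_asymm _ _ h1 hh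
    have hnv : ¬ Wlt v.reverse v := fun hh => hnu (h.1 hh)
    rcases wlt_total v v.reverse with h2 | h2 | h2
    · exact absurd h2 hvr
    · exact h2
    · exact absurd h2 hnv

omit [LinearOrder A] in
lemma cons_eq_append_single {h c : A} {l l' : List A} (H : h :: l = l' ++ [c]) :
    (l = [] ∧ h = c ∧ l' = []) ∨ ∃ l'', l' = h :: l'' ∧ l = l'' ++ [c] := by
  cases l' with
  | nil =>
    simp at H
    exact Or.inl ⟨H.2, H.1, rfl⟩
  | cons a t =>
    simp at H
    exact Or.inr ⟨t, by rw [H.1], H.2⟩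

omit [LinearOrder A] in
lemma last_eq {a b : A} {l₁ l₂ : List A} (h : l₁ ++ [a] = l₂ ++ [b]) :
    l₁ = l₂ ∧ a = b := by
  have := congrArg List.reverse h
  simp at this
  exact ⟨by simpa using congrArg List.reverse this.2, this.1⟩

omit [LinearOrder A] in
lemma last2_eq {a b c d : A} {l₁ l₂ : List A} (h : l₁ ++ [a, b] = l₂ ++ [c, d]) :
    l₁ = l₂ ∧ a = c ∧ b = d := by
  have h' : (l₁ ++ [a]) ++ [b] = (l₂ ++ [c]) ++ [d] := by simpa using h
  obtain ⟨h1, rfl⟩ := last_eq h'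
  obtain ⟨h2, rfl⟩ := last_eq h1
  exact ⟨h2, rfl, rfl⟩

omit [LinearOrder A] in
lemma suffix2_cases {x y l r : List A} {c d : A} (h1 : x = l ++ r) (h2 : x = y ++ [c, d]) :
    (∃ r₁, r = r₁ ++ [c, d]) ∨ r = [d] ∨ r = [] := by
  rcases r.eq_nil_or_concat with rfl | ⟨r', e, rfl⟩
  · exact Or.inr (Or.inr rfl)
  · have he : (l ++ r') ++ [e] = y ++ [c, d] := by
      rw [h1] at h2; simpa using h2
    have h3 : (l ++ r') ++ [e] = (y ++ [c]) ++ [d] := by simpa using he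
    obtain ⟨h4, rfl⟩ := last_eq h3
    rcases r'.eq_nil_or_concat with rfl | ⟨r'', f, rfl⟩
    · exact Or.inr (Or.inl rfl)
    · have h5 : (l ++ r'') ++ [f] = y ++ [c] := by simpa using h4
      obtain ⟨-, rfl⟩ := last_eq h5
      exact Or.inl ⟨r'', by simp⟩

omit [LinearOrder A] in
lemma first_occ {a : A} {t : List A} (h : a ∈ t) :
    ∃ l r, t = l ++ [a] ++ r ∧ a ∉ l := by
  induction t with
  | nil => simp at h
  | cons b t ih =>
    by_cases hb : a = b
    · exact ⟨[], t, by simp [hb], by simp⟩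
    · have : a ∈ t := by rcases List.mem_cons.1 h with h | h; exact absurd h hb; exact h
      obtain ⟨l, r, rfl, hl⟩ := ih this
      exact ⟨b :: l, r, by simp, by simp [hl, hb]⟩

omit [LinearOrder A] in
lemma last_occ {a : A} {t : List A} (h : a ∈ t) :
    ∃ l r, t = l ++ [a] ++ r ∧ a ∉ r := by
  have h' : a ∈ t.reverse := by simpa using h
  obtain ⟨l, r, hlr, hl⟩ := first_occ h'
  refine ⟨r.reverse, l.reverse, ?_, by simpa using hl⟩
  have := congrArg List.reverse hlr
  simpa using this

end Generic

abbrev F := Fin 3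

def P1 (x : List F) : Prop := ∀ l r : List F, x = l ++ [2] ++ r → ∃ r', r = 0 :: r'
def P2 (x : List F) : Prop := ∀ l r : List F, x = l ++ [0] ++ r → ∃ l', l = l' ++ [2]
def P3 (x : List F) : Prop := ∀ l r : List F, x = l ++ [2, 0, 1] ++ r → False

lemma fcases (e : F) : e = 0 ∨ e = 1 ∨ e = 2 := by fin_cases e <;> simp

lemma wltA {r : List F} (h : r = [(0:F)] ∨ Wlt r [(0:F)]) : ∃ r', r = 0 :: r' := by
  rcases h with rfl | h
  · exact ⟨[], rfl⟩
  · cases r with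
    | nil => exact absurd h (wlt_nil_left _)
    | cons a r₁ =>
      rcases wlt_cons_cons.1 h with h' | ⟨rfl, -⟩
      · exact absurd h' (by simp)
      · exact ⟨r₁, rfl⟩

lemma wltB {z : List F} (h : [(0:F)] = 0 :: 2 :: z ∨ Wlt [(0:F)] (0 :: 2 :: z)) : False := by
  rcases h with h | h
  · simp at h
  · rcases wlt_cons_cons.1 h with h' | ⟨-, h'⟩
    · exact absurd h' (by simp)
    · exact wlt_nil_left _ h'

lemma P1_cons {h : F} {t : List F} (H : P1 (h :: t)) : P1 t := by
  intro l r hx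
  exact H (h :: l) r (by simp [hx])

lemma P2_cons {h : F} {t : List F} (H : P2 (h :: t)) (hh : h ≠ (2:F)) : P2 t := by
  intro l r hx
  obtain ⟨l', hl'⟩ := H (h :: l) r (by simp [hx])
  have hl'' : h :: l = l' ++ [2] := hl'
  rcases cons_eq_append_single hl'' with ⟨-, h2, -⟩ | ⟨l'', -, h3⟩
  · exact absurd h2 hh
  · exact ⟨l'', h3⟩

lemma P2_cons2 {t : List F} (H : P2 ((2:F) :: (0:F) :: t)) : P2 t := by
  intro l r hx
  obtain ⟨l', hl'⟩ := H (2 :: 0 :: l) r (by simp [hx])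
  have hl'' : (2:F) :: ((0:F) :: l) = l' ++ [2] := hl'
  rcases cons_eq_append_single hl'' with ⟨h0, -, -⟩ | ⟨l'', -, h3⟩
  · exact absurd h0 (by simp)
  · rcases cons_eq_append_single h3 with ⟨-, h2, -⟩ | ⟨l₃, -, h4⟩
    · exact absurd h2 (by decide)
    · exact ⟨l₃, h4⟩

lemma P2_cons_ne {g h : F} {t : List F} (H : P2 (g :: h :: t)) (hh : h ≠ (0:F)) :
    P2 (h :: t) := by
  intro l r hx
  cases l with
  | nil =>
    have : h = 0 := by
      have := congrArg List.head? hx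
      simpa using this
    exact absurd this hh
  | cons a l₀ =>
    obtain ⟨l', hl'⟩ := H (g :: a :: l₀) r (by
      have hx' : h :: t = a :: (l₀ ++ [0] ++ r) := by simpa using hx
      simp [hx'])
    have hl'' : g :: (a :: l₀) = l' ++ [2] := hl'
    rcases cons_eq_append_single hl'' with ⟨h0, -, -⟩ | ⟨l'', -, h3⟩
    · exact absurd h0 (by simp)
    · exact ⟨l'', h3⟩

lemma count_ge (n : ℕ) : ∀ y : List F, y.length ≤ n → P1 y → y.count 2 ≤ y.count 0 := by
  induction n with
  | zero =>
    intro y hy _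
    have : y = [] := List.length_eq_zero_iff.1 (Nat.le_zero.1 hy)
    simp [this]
  | succ n ih =>
    intro y hy h1
    match y with
    | [] => simp
    | (0:F) :: t =>
      have := ih t (by simpa using Nat.le_of_succ_le_succ hy) (P1_cons h1)
      simp [List.count_cons]; omega
    | (1:F) :: t =>
      have := ih t (by simpa using Nat.le_of_succ_le_succ hy) (P1_cons h1)
      simp [List.count_cons]; omega
    | (2:F) :: t =>
      obtain ⟨t', rfl⟩ := h1 [] t (by simp)
      have h1' : P1 t' := P1_cons (P1_cons h1)
      have hlen : t'.length ≤ n := by simp at hy; omega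
      have := ih t' hlen h1'
      simp [List.count_cons]; omega

lemma count_ge' (n : ℕ) : ∀ y : List F, y.length ≤ n → P2 y → y.count 0 ≤ y.count 2 := by
  induction n with
  | zero =>
    intro y hy _
    have : y = [] := List.length_eq_zero_iff.1 (Nat.le_zero.1 hy)
    simp [this]
  | succ n ih =>
    intro y hy h2
    match y with
    | [] => simp
    | (0:F) :: t =>
      obtain ⟨l', hl'⟩ := h2 [] t (by simp)
      simp at hl'
    | (1:F) :: t =>
      have := ih t (by simpa using Nat.le_of_succ_le_succ hy) (P2_cons h2 (by decide))
      simp [List.count_cons]; omega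
    | (2:F) :: t =>
      match t with
      | [] => simp
      | (0:F) :: t' =>
        have hp := P2_cons2 h2
        have hlen : t'.length ≤ n := by simp at hy; omega
        have := ih t' hlen hp
        simp [List.count_cons]; omega
      | (1:F) :: t' =>
        have hp : P2 ((1:F) :: t') := P2_cons_ne h2 (by decide)
        have := ih _ (by simpa using Nat.le_of_succ_le_succ hy) hp
        simp [List.count_cons] at this ⊢; omega
      | (2:F) :: t' =>
        have hp : P2 ((2:F) :: t') := P2_cons_ne h2 (by decide)
        have := ih _ (by simpa using Nat.le_of_succ_le_succ hy) hp
        simp [List.count_cons] at this ⊢; omega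

lemma cnt (n : ℕ) : ∀ y : List F, y.length ≤ n → P1 y → y.count 0 = y.count 2 → P2 y := by
  induction n with
  | zero =>
    intro y hy _ _
    have : y = [] := List.length_eq_zero_iff.1 (Nat.le_zero.1 hy)
    subst this; intro l r hx; simp at hx
  | succ n ih =>
    intro y hy h1 hc
    match y with
    | [] => intro l r hx; simp at hx
    | (0:F) :: t =>
      have hge := count_ge (n+1) t (by simp at hy; omega) (P1_cons h1)
      simp [List.count_cons] at hc
      omega
    | (1:F) :: t =>
      have hp2 := ih t (by simpa using Nat.le_of_succ_le_succ hy) (P1_cons h1)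
        (by simp [List.count_cons] at hc; omega)
      intro l r hx
      cases l with
      | nil => simp at hx
      | cons a l₀ =>
        simp at hx
        obtain ⟨l', hl'⟩ := hp2 l₀ r (by simpa using hx.2)
        exact ⟨1 :: l', by simp [hx.1, hl']⟩
    | (2:F) :: t =>
      obtain ⟨t', rfl⟩ := h1 [] t (by simp)
      have hp1 : P1 t' := P1_cons (P1_cons h1)
      have hp2 := ih t' (by simp at hy; omega) hp1
        (by simp [List.count_cons] at hc; omega)
      intro l r hx
      match l with
      | [] => simp at hx
      | [(2:F)] => exact ⟨[], rfl⟩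
      | (a:F) :: b :: l₀ =>
        simp at hx
        obtain ⟨rfl, rfl, hx3⟩ := hx
        obtain ⟨l', hl'⟩ := hp2 l₀ r (by simpa using hx3)
        exact ⟨2 :: 0 :: l', by simp [hl']⟩

lemma cnt' (n : ℕ) : ∀ y : List F, y.length ≤ n → P2 y → y.count 0 = y.count 2 → P1 y := by
  induction n with
  | zero =>
    intro y hy _ _
    have : y = [] := List.length_eq_zero_iff.1 (Nat.le_zero.1 hy)
    subst this; intro l r hx; simp at hx
  | succ n ih =>
    intro y hy h2 hc
    match y with
    | [] => intro l r hx; simp at hx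
    | (0:F) :: t =>
      obtain ⟨l', hl'⟩ := h2 [] t (by simp)
      simp at hl'
    | (1:F) :: t =>
      have hp1 := ih t (by simpa using Nat.le_of_succ_le_succ hy) (P2_cons h2 (by decide))
        (by simp [List.count_cons] at hc; omega)
      intro l r hx
      cases l with
      | nil => simp at hx
      | cons a l₀ =>
        simp at hx
        exact hp1 l₀ r (by simpa using hx.2)
    | (2:F) :: t =>
      match t with
      | [] => simp [List.count_cons] at hc
      | (0:F) :: t' =>
        have hp2 := P2_cons2 h2
        have hp1 := ih t' (by simp at hy; omega) hp2
          (by simp [List.count_cons] at hc; omega)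
        intro l r hx
        match l with
        | [] => simp at hx; exact ⟨t', by simp [hx]⟩
        | [(2:F)] => simp at hx
        | (a:F) :: b :: l₀ =>
          simp at hx
          obtain ⟨rfl, rfl, hx3⟩ := hx
          exact hp1 l₀ r (by simpa using hx3)
      | (1:F) :: t' =>
        have hp : P2 ((1:F) :: t') := P2_cons_ne h2 (by decide)
        have := count_ge' n _ (by simp at hy ⊢; omega) hp
        simp [List.count_cons] at hc this
        omega
      | (2:F) :: t' =>
        have hp : P2 ((2:F) :: t') := P2_cons_ne h2 (by decide)
        have := count_ge' n _ (by simp at hy ⊢; omega) hp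
        simp [List.count_cons] at hc this
        omega

lemma syn (n : ℕ) : ∀ x t : List F, x.length ≤ n → x = 0 :: t → P1 x → P2 t → P3 x →
    ∃ n' m' : ℕ,
      x = 0 :: (List.replicate n' 1 ++ (List.replicate m' ([2, 0] : List F)).flatten) := by
  induction n with
  | zero => intro x t hlen hx _ _ _; subst hx; simp at hlen
  | succ n ih =>
    intro x t hlen hx h1 h2 h3
    rcases t.eq_nil_or_concat with rfl | ⟨t₁, e, rfl⟩
    · exact ⟨0, 0, by simp [hx]⟩
    rcases fcases e with rfl | rfl | rfl
    · -- ends with 0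
      obtain ⟨l₂, hl₂⟩ := h2 t₁ [] (by simp)
      subst hl₂
      have hx' : x = (0 :: l₂) ++ [2, 0] := by simp [hx]
      have hp1 : P1 (0 :: l₂) := by
        intro l r hr
        have hx2 : x = l ++ [2] ++ (r ++ [2, 0]) := by rw [hx', hr]; simp
        obtain ⟨r', hr'⟩ := h1 _ _ hx2
        cases r with
        | nil => simp at hr'
        | cons h r₀ =>
          have : h = 0 := by
            have := congrArg List.head? hr'
            simpa using this
          exact ⟨r₀, by rw [this]⟩
      have hp2 : P2 l₂ := by
        intro l r hr
        exact h2 l (r ++ [2] ++ [0]) (by rw [hr]; simp)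
      have hp3 : P3 (0 :: l₂) := by
        intro l r hr
        exact h3 l (r ++ [2, 0]) (by rw [hx', hr]; simp)
      obtain ⟨n', m', hres⟩ := ih (0 :: l₂) l₂ (by rw [hx'] at hlen; simp at hlen ⊢; omega)
        rfl hp1 hp2 hp3
      refine ⟨n', m' + 1, ?_⟩
      rw [hx', hres]
      simp [List.replicate_succ' (n := m'), List.flatten_append]
    · -- ends with 1 : no 0 and no 2 in t
      set t := t₁.concat 1 with ht
      have hno0 : (0:F) ∉ t := by
        intro hmem
        obtain ⟨l, r, hsplit, h0r⟩ := last_occ hmem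
        obtain ⟨l', rfl⟩ := h2 l r hsplit
        cases r with
        | nil =>
          have h9 : (l' ++ [2]) ++ [0] = t₁ ++ [1] := by
            simpa using hsplit.symm.trans ht
          exact absurd (last_eq h9).2 (by decide)
        | cons h r₁ =>
          rcases fcases h with rfl | rfl | rfl
          · exact h0r (by simp)
          · exact h3 (0 :: l') r₁ (by rw [hx, hsplit]; simp)
          · have hx2 : x = ((0 :: l') ++ [2, 0]) ++ [2] ++ r₁ := by
              rw [hx, hsplit]; simp
            obtain ⟨r₂, rfl⟩ := h1 _ _ hx2
            exact h0r (by simp)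
      have hno2 : (2:F) ∉ t := by
        intro hmem
        obtain ⟨l, r, hsplit, -⟩ := last_occ hmem
        obtain ⟨r', hr'⟩ := h1 (0 :: l) r (by rw [hx, hsplit]; simp)
        exact hno0 (by rw [hsplit, hr']; simp)
      have hall : ∀ b ∈ t, b = (1:F) := by
        intro b hb
        rcases fcases b with rfl | rfl | rfl
        · exact absurd hb hno0
        · rfl
        · exact absurd hb hno2
      refine ⟨t.length, 0, ?_⟩
      rw [hx, List.eq_replicate_of_mem hall]
      simp
    · -- ends with 2 : impossible
      obtain ⟨r', hr'⟩ := h1 (0 :: t₁) [] (by rw [hx]; simp)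
      simp at hr'

end SingularAux
namespace SingularAux

lemma sub00 {x t : List F} (hs : Singular x) (hcount : x.count 0 = x.count 2 + 1)
    (hx : x = 0 :: 0 :: t) : False := by
  have hp1 : P1 x := by
    intro l r hr
    match l with
    | [] => rw [hx] at hr; simp at hr
    | [a] =>
      rw [hx] at hr; simp at hr
    | a :: b :: l₀ =>
      rw [hx] at hr; simp at hr
      obtain ⟨rfl, rfl, h3⟩ := hr
      have hkey := keyLT hs (l := [0]) (m := l₀) (r := r) (d := 0) (e := 2)
        (by rw [hx, h3]; simp) (by decide)
      exact wltA (by simpa using hkey)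
  have hp2 := cnt (0 :: t).length (0 :: t) le_rfl (P1_cons (hx ▸ hp1))
    (by rw [hx] at hcount; simp [List.count_cons] at hcount; simp [List.count_cons]; omega)
  obtain ⟨l', hl'⟩ := hp2 [] t (by simp)
  simp at hl'

lemma caseB {x t₀ y : List F} (hs : Singular x) (hcount : x.count 0 = x.count 2 + 1)
    (hx : x = 0 :: 1 :: t₀) (hy : x = y ++ [0]) :
    ∃ n' m' : ℕ,
      x = 0 :: (List.replicate n' 1 ++ (List.replicate m' ([2, 0] : List F)).flatten) := by
  have hp1 : P1 x := by
    intro l r hr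
    match l with
    | [] => rw [hx] at hr; simp at hr
    | [a] =>
      rw [hx] at hr; simp at hr
    | a :: b :: l₀ =>
      rw [hx] at hr; simp at hr
      obtain ⟨rfl, rfl, h3⟩ := hr
      have hkey := keyLT hs (l := [0]) (m := l₀) (r := r) (d := 1) (e := 2)
        (by rw [hx, h3]; simp) (by decide)
      exact wltA (by simpa using hkey)
  have hp2 : P2 (1 :: t₀) := by
    apply cnt (1 :: t₀).length _ le_rfl (P1_cons (hx ▸ hp1))
    rw [hx] at hcount; simp [List.count_cons] at hcount ⊢; omega
  have hp3 : P3 x := by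
    intro l r hr
    rcases r.eq_nil_or_concat with rfl | ⟨r₁, e, rfl⟩
    · have h9 : (l ++ [2, 0]) ++ [1] = y ++ [0] := by
        rw [← hy, hr]; simp
      exact absurd (last_eq h9).2 (by decide)
    · have h9 : (l ++ [2, 0, 1] ++ r₁) ++ [e] = y ++ [0] := by
        rw [← hy, hr]; simp
      obtain ⟨h10, rfl⟩ := last_eq h9
      -- use P2 on the 0 at the end
      have hsp : x = 0 :: ((1 :: t₀)) := hx
      have hxl : l ≠ [] := by
        intro hl
        subst hl
        have h12 := hx.symm.trans hr
        simp at h12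
      obtain ⟨lh, ll, rfl⟩ : ∃ lh ll, l = lh :: ll := by
        cases l with
        | nil => exact absurd rfl hxl
        | cons a b => exact ⟨a, b, rfl⟩
      have hlh : lh = 0 := by
        rw [hr] at hx
        have := congrArg List.head? hx
        simpa using this
      subst hlh
      have htsp : 1 :: t₀ = (ll ++ [2, 0, 1] ++ r₁) ++ [0] ++ [] := by
        have := hx.symm.trans hr
        simpa using this
      obtain ⟨l', hl'⟩ := hp2 _ _ htsp
      rcases r₁.eq_nil_or_concat with rfl | ⟨r₂, f, rfl⟩
      · have h11 : (ll ++ [2, 0]) ++ [1] = l' ++ [2] := by simpa using hl'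
        exact absurd (last_eq h11).2 (by decide)
      · have h11 : (ll ++ [2, 0, 1] ++ r₂) ++ [f] = l' ++ [2] := by simpa using hl'
        obtain ⟨-, rfl⟩ := last_eq h11
        have hkey := keyLT hs (l := (0 :: ll) ++ [2, 0]) (m := r₂) (r := [0]) (d := 1) (e := 2)
          (by rw [hr]; simp) (by decide)
        exact wltB (by simpa using hkey)
  exact syn x.length x (1 :: t₀) le_rfl hx hp1 hp2 hp3

end SingularAux
namespace SingularAux

lemma rev_append_single (l : List F) (a : F) : (l ++ [a]).reverse = a :: l.reverse := by simp

lemma wltC {z : List F} (h : [(0:F)] = 0 :: z ∨ Wlt [(0:F)] (0 :: z)) : z = [] := by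
  rcases h with h | h
  · simpa using h.symm
  · rcases wlt_cons_cons.1 h with h' | ⟨-, h'⟩
    · exact absurd h' (by simp)
    · exact absurd h' (wlt_nil_left _)

lemma caseCC {x s y : List F} (hs : Singular x) (hcount : x.count 0 = x.count 2 + 1)
    (hx : x = 0 :: 2 :: s) (hy : x = y ++ [2, 0]) :
    ∃ n' m' : ℕ,
      x = 0 :: (List.replicate n' 1 ++ (List.replicate m' ([2, 0] : List F)).flatten) := by
  -- F1 : no factor [0,0]
  have hF1 : ∀ l r : List F, x = l ++ [0, 0] ++ r → False := by
    intro l r hr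
    rcases suffix2_cases (x := x) (l := l ++ [0, 0]) (r := r) (by simp [hr]) hy with
      ⟨r₁, rfl⟩ | rfl | rfl
    · have hkey := keyLT hs (l := l ++ [0]) (m := r₁) (r := [0]) (d := 0) (e := 2)
        (by rw [hr]; simp) (by decide)
      rw [rev_append_single] at hkey
      have hz := wltC hkey
      rw [List.reverse_eq_nil_iff] at hz
      subst hz
      have := hx.symm.trans hr
      simp at this
    · have h9 : x = (l ++ [0]) ++ [0, 0] := by rw [hr]; simp
      exact absurd (last2_eq (h9.symm.trans hy)).2.1 (by decide)
    · have h9 : x = l ++ [0, 0] := by rw [hr]; simp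
      exact absurd (last2_eq (h9.symm.trans hy)).2.1 (by decide)
  -- F2 : no factor [0,1]
  have hF2 : ∀ l r : List F, x = l ++ [0, 1] ++ r → False := by
    intro l r hr
    rcases suffix2_cases (x := x) (l := l ++ [0, 1]) (r := r) (by simp [hr]) hy with
      ⟨r₁, rfl⟩ | rfl | rfl
    · have hkey := keyLT hs (l := l ++ [0]) (m := r₁) (r := [0]) (d := 1) (e := 2)
        (by rw [hr]; simp) (by decide)
      rw [rev_append_single] at hkey
      have hz := wltC hkey
      rw [List.reverse_eq_nil_iff] at hz
      subst hz
      have := hx.symm.trans hr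
      simp at this
    · have h9 : x = (l ++ [0]) ++ [1, 0] := by rw [hr]; simp
      exact absurd (last2_eq (h9.symm.trans hy)).2.1 (by decide)
    · have h9 : x = l ++ [0, 1] := by rw [hr]; simp
      exact absurd (last2_eq (h9.symm.trans hy)).2.2 (by decide)
  -- F3 : no factor [1,0]
  have hF3 : ∀ l r : List F, x = l ++ [1, 0] ++ r → False := by
    intro l r hr
    match l with
    | [] =>
      have := hx.symm.trans hr; simp at this
    | [a] =>
      have := hx.symm.trans hr; simp at this
    | a :: b :: l₀ =>
      have h5 := hx.symm.trans hr
      simp at h5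
      obtain ⟨rfl, rfl, h6⟩ := h5
      have hkey := keyGT hs (l := [0]) (m := l₀) (r := 0 :: r) (d := 2) (e := 1)
        (by rw [hr]; simp) (by decide)
      have hr0 : r = [] := by
        rcases hkey with h | h
        · simpa using h.symm
        · rcases wlt_cons_cons.1 h with h' | ⟨-, h'⟩
          · exact absurd h' (by simp)
          · exact absurd h' (wlt_nil_left _)
      subst hr0
      have h9 : x = (0 :: 2 :: l₀) ++ [1, 0] := by rw [hr]; simp
      exact absurd (last2_eq (h9.symm.trans hy)).2.1 (by decide)
  -- P2 of the tail 2 :: s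
  have hp2 : P2 (2 :: s) := by
    intro l r hr
    have hxsp : x = (0 :: l) ++ [0] ++ r := by rw [hx]; simp [hr]
    rcases (0 :: l).eq_nil_or_concat with h | ⟨l₁, e, hl₁⟩
    · simp at h
    · rcases fcases e with rfl | rfl | rfl
      · exact (hF1 l₁ r (by rw [hxsp, hl₁]; simp)).elim
      · exact (hF3 l₁ r (by rw [hxsp, hl₁]; simp)).elim
      · have h7 : (0:F) :: l = l₁ ++ [2] := by simpa using hl₁
        rcases cons_eq_append_single h7 with ⟨-, h8, -⟩ | ⟨l₂, -, h9⟩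
        · exact absurd h8 (by decide)
        · exact ⟨l₂, h9⟩
  -- P1 of x via counting
  have hp1 : P1 x := by
    have hp1t := cnt' (2 :: s).length (2 :: s) le_rfl hp2
      (by rw [hx] at hcount; simp [List.count_cons] at hcount ⊢; omega)
    intro l r hr
    match l with
    | [] => rw [hx] at hr; simp at hr
    | a :: l₀ =>
      have h5 := hx.symm.trans hr
      simp at h5
      exact hp1t l₀ r (by simpa using h5.2)
  -- no 1 occurs in x
  have hno1 : (1:F) ∉ x := by
    intro hmem
    obtain ⟨l, r, hsplit, h1l⟩ := first_occ hmem
    rcases l.eq_nil_or_concat with rfl | ⟨l₁, e, rfl⟩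
    · have := hx.symm.trans hsplit; simp at this
    · rcases fcases e with rfl | rfl | rfl
      · exact hF2 l₁ r (by rw [hsplit]; simp)
      · exact h1l (by simp)
      · obtain ⟨r', hr'⟩ := hp1 l₁ ([1] ++ r) (by rw [hsplit]; simp)
        simp at hr'
  -- P3 trivially
  have hp3 : P3 x := by
    intro l r hr
    exact hno1 (by rw [hr]; simp)
  exact syn x.length x (2 :: s) le_rfl hx hp1 hp2 hp3

end SingularAux
namespace SingularAux

lemma topNZ {x t : List F} {h : F} (hs : Singular x)
    (hcount : x.count 0 = x.count 2 + 1) (hx : x = h :: t) (hh : h ≠ 0) :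
    ∃ p, x = List.replicate p 1 ++ [0] := by
  have hzero : ∀ l r : List F, x = l ++ [0] ++ r → r = [] := by
    intro l r hr
    cases l with
    | nil =>
      rw [hx] at hr
      simp at hr
      exact absurd hr.1 hh
    | cons a m =>
      have ha : (0:F) < a := by
        have : h = a := by
          rw [hx] at hr
          simpa using (congrArg List.head? hr)
        rcases fcases a with rfl | rfl | rfl
        · exact absurd this hh
        · decide
        · decide
      have hkey := keyGT hs (l := ([]:List F)) (m := m) (r := r) (d := a) (e := 0)
        (by simp [hr]) ha
      rcases hkey with h9 | h9
      · simpa using h9.symm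
      · rw [List.reverse_nil] at h9
        exact absurd h9 (wlt_nil_left _)
  have h0mem : (0:F) ∈ x := by
    have : 0 < x.count 0 := by omega
    exact List.count_pos_iff.1 this
  obtain ⟨s, t', hsplit⟩ := List.append_of_mem h0mem
  have ht' : t' = [] := hzero s t' (by simp [hsplit])
  subst ht'
  have h0s : (0:F) ∉ s := by
    intro hm
    obtain ⟨s₁, s₂, hs₂⟩ := List.append_of_mem hm
    have := hzero s₁ (s₂ ++ [0]) (by rw [hsplit, hs₂]; simp)
    simp at this
  have hc0 : x.count 0 = 1 := by
    rw [hsplit]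
    simp [List.count_append, List.count_eq_zero.2 h0s]
  have hc2 : x.count 2 = 0 := by omega
  have h2x : (2:F) ∉ x := List.count_eq_zero.1 hc2
  have hall : ∀ b ∈ s, b = (1:F) := by
    intro b hb
    rcases fcases b with rfl | rfl | rfl
    · exact absurd hb h0s
    · rfl
    · exact absurd (by rw [hsplit]; simp [hb] : (2:F) ∈ x) h2x
  exact ⟨s.length, by rw [hsplit, List.eq_replicate_of_mem hall]; simp⟩

lemma topE1 {x t₁ : List F} (hs : Singular x)
    (hcount : x.count 0 = x.count 2 + 1) (hx : x = 0 :: (t₁ ++ [1])) :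
    ∃ n', x = 0 :: List.replicate n' 1 := by
  have hzero : ∀ l r : List F, x = l ++ [0] ++ r → l = [] := by
    intro l r hr
    rcases r.eq_nil_or_concat with rfl | ⟨r₁, f, rfl⟩
    · have h9 : x = l ++ [0] := by simp [hr]
      have h10 := last_eq (h9.symm.trans (show x = (0 :: t₁) ++ [1] by simp [hx]))
      exact absurd h10.2 (by decide)
    · have hf : f = 1 := by
        have h9 : x = (l ++ [0] ++ r₁) ++ [f] := by simp [hr]
        exact (last_eq (h9.symm.trans (show x = (0 :: t₁) ++ [1] by simp [hx]))).2
      subst hf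
      have hkey := keyLT hs (l := l) (m := r₁) (r := ([]:List F)) (d := 0) (e := 1)
        (by simp [hr]) (by decide)
      rcases hkey with h9 | h9
      · exact List.reverse_eq_nil_iff.1 h9.symm
      · exact absurd h9 (wlt_nil_left _)
  have h0t : (0:F) ∉ (t₁ ++ [1]) := by
    intro hm
    obtain ⟨s₁, s₂, hs₂⟩ := List.append_of_mem hm
    have := hzero (0 :: s₁) s₂ (by rw [hx, hs₂]; simp)
    simp at this
  have hc0 : x.count 0 = 1 := by
    rw [hx]
    simp [List.count_cons, List.count_eq_zero.2 h0t]
  have hc2 : x.count 2 = 0 := by omega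
  have h2x : (2:F) ∉ x := List.count_eq_zero.1 hc2
  have hall : ∀ b ∈ t₁ ++ [1], b = (1:F) := by
    intro b hb
    rcases fcases b with rfl | rfl | rfl
    · exact absurd hb h0t
    · rfl
    · exact absurd (by rw [hx]; simp [hb] : (2:F) ∈ x) h2x
  exact ⟨(t₁ ++ [1]).length, by rw [hx, List.eq_replicate_of_mem hall]; simp⟩

lemma topE2 {x t₁ : List F} (hs : Singular x)
    (hcount : x.count 0 = x.count 2 + 1) (hx : x = 0 :: (t₁ ++ [2])) : False := by
  have hzero : ∀ l r : List F, x = l ++ [0] ++ r → l = [] := by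
    intro l r hr
    rcases r.eq_nil_or_concat with rfl | ⟨r₁, f, rfl⟩
    · have h9 : x = l ++ [0] := by simp [hr]
      have h10 := last_eq (h9.symm.trans (show x = (0 :: t₁) ++ [2] by simp [hx]))
      exact absurd h10.2 (by decide)
    · have hf : f = 2 := by
        have h9 : x = (l ++ [0] ++ r₁) ++ [f] := by simp [hr]
        exact (last_eq (h9.symm.trans (show x = (0 :: t₁) ++ [2] by simp [hx]))).2
      subst hf
      have hkey := keyLT hs (l := l) (m := r₁) (r := ([]:List F)) (d := 0) (e := 2)
        (by simp [hr]) (by decide)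
      rcases hkey with h9 | h9
      · exact List.reverse_eq_nil_iff.1 h9.symm
      · exact absurd h9 (wlt_nil_left _)
  have h0t : (0:F) ∉ (t₁ ++ [2]) := by
    intro hm
    obtain ⟨s₁, s₂, hs₂⟩ := List.append_of_mem hm
    have := hzero (0 :: s₁) s₂ (by rw [hx, hs₂]; simp)
    simp at this
  have hc0 : x.count 0 = 1 := by
    rw [hx]
    simp [List.count_cons, List.count_eq_zero.2 h0t]
  have hc2 : x.count 2 = 0 := by omega
  have h2x : (2:F) ∉ x := List.count_eq_zero.1 hc2
  exact h2x (by rw [hx]; simp)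

end SingularAux

open SingularAux in
theorem singular_delta_zero_form (x : List (Fin 3)) (hsing : Singular x)
    (hcount : x.count 0 = x.count 2 + 1) :
    ∃ n m : ℕ,
      x = 0 :: (List.replicate n 1 ++ (List.replicate m ([2, 0] : List (Fin 3))).flatten) ∨
      x.reverse =
        0 :: (List.replicate n 1 ++ (List.replicate m ([2, 0] : List (Fin 3))).flatten) := by
  have hxne : x ≠ [] := by
    intro h
    rw [h] at hcount
    simp at hcount
  obtain ⟨h, t, hx⟩ : ∃ h t, x = h :: t := by
    cases x with
    | nil => exact absurd rfl hxne
    | cons a b => exact ⟨a, b, rfl⟩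
  rcases fcases h with rfl | rfl | rfl
  · -- head is 0
    rcases t.eq_nil_or_concat with rfl | ⟨t₁, e, rfl⟩
    · exact ⟨0, 0, Or.inl (by simp [hx])⟩
    rcases fcases e with rfl | rfl | rfl
    · -- last letter 0
      cases t₁ with
      | nil =>
        rw [hx] at hcount
        simp [List.count_cons] at hcount
      | cons d t₂ =>
        rcases fcases d with rfl | rfl | rfl
        · exact (sub00 (t := t₂ ++ [0]) hsing hcount (by simp [hx])).elim
        · obtain ⟨n, m, hres⟩ := caseB (t₀ := t₂ ++ [0]) (y := 0 :: 1 :: t₂) hsing hcount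
            (by simp [hx]) (by simp [hx])
          exact ⟨n, m, Or.inl hres⟩
        · rcases t₂.eq_nil_or_concat with rfl | ⟨t₃, f, rfl⟩
          · exact ⟨0, 1, Or.inl (by simp [hx])⟩
          rcases fcases f with rfl | rfl | rfl
          · have hrev : x.reverse = 0 :: 0 :: (t₃.reverse ++ [2, 0]) := by
              rw [hx]; simp
            exact (sub00 (singular_reverse hsing)
              (by simpa using hcount) hrev).elim
          · have hrev : x.reverse = 0 :: 1 :: (t₃.reverse ++ [2, 0]) := by
              rw [hx]; simp
            have hrev2 : x.reverse = (0 :: 1 :: (t₃.reverse ++ [2])) ++ [0] := by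
              rw [hx]; simp
            obtain ⟨n, m, hres⟩ := caseB (singular_reverse hsing)
              (by simpa using hcount) hrev hrev2
            exact ⟨n, m, Or.inr hres⟩
          · obtain ⟨n, m, hres⟩ := caseCC (s := t₃ ++ [2, 0]) (y := 0 :: 2 :: t₃) hsing hcount
              (by simp [hx]) (by simp [hx])
            exact ⟨n, m, Or.inl hres⟩
    · -- last letter 1
      obtain ⟨n, hres⟩ := topE1 (t₁ := t₁) hsing hcount (by simp [hx])
      exact ⟨n, 0, Or.inl (by simp [hres])⟩
    · -- last letter 2
      exact (topE2 (t₁ := t₁) hsing hcount (by simp [hx])).elim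
  · -- head is 1
    obtain ⟨p, hres⟩ := topNZ hsing hcount hx (by decide)
    refine ⟨p, 0, Or.inr ?_⟩
    rw [hres]
    simp
  · -- head is 2
    obtain ⟨p, hres⟩ := topNZ hsing hcount hx (by decide)
    refine ⟨p, 0, Or.inr ?_⟩
    rw [hres]
    simp
end

section
/- Let x be a one-sided infinite word over an ordered alphabet A whose language is closed under reversal. If x is singular, then x ≤ x' for every suffix x' of x; in particular, if x is not purely periodic then x is an infinite Lyndon word (x is strictly smaller than each of its proper suffixes). -/
/-- Concatenation of a finite word with a one-sided infinite word. -/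
def listAppendInf {A : Type*} (u : List A) (w : ℕ → A) : ℕ → A :=
  fun n => if h : n < u.length then u.get ⟨n, h⟩ else w (n - u.length)

/-- Lexicographic (strict) order between one-sided infinite words. -/
def InfLt {A : Type*} [LinearOrder A] (x y : ℕ → A) : Prop :=
  ∃ n, (∀ i < n, x i = y i) ∧ x n < y n

/-- `InfLtList w u` : the infinite word `w` is lexicographically smaller than the
finite word `u`, with the convention that `w < u` whenever `u` is a prefix of `w`. -/
def InfLtList {A : Type*} [LinearOrder A] : (ℕ → A) → List A → Prop
  | _, [] => True
  | w, a :: u => w 0 < a ∨ (w 0 = a ∧ InfLtList (fun n => w (n + 1)) u)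

/-- A one-sided infinite word is singular if every factorization
`x = reverse u ++ v ++ w` with `v` a nonempty non-palindromic finite word
satisfies `v < v̄ ↔ w < u`. -/
def SingularInfN {A : Type*} [LinearOrder A] (x : ℕ → A) : Prop :=
  ∀ (u v : List A) (w : ℕ → A),
    x = listAppendInf (u.reverse ++ v) w → v ≠ [] → v ≠ v.reverse →
      (Wlt v v.reverse ↔ InfLtList w u)

/-- `s` is a finite factor of the one-sided infinite word `x`. -/
def FactorN {A : Type*} (x : ℕ → A) (s : List A) : Prop :=
  ∃ i : ℕ, s = (List.range s.length).map fun j => x (i + j)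

lemma wlt_asymm_s17 {A : Type*} [LinearOrder A] : ∀ (a b : List A), Wlt a b → Wlt b a → False := by
  intro a
  induction a with
  | nil => intro b h _; exact h
  | cons c u ih =>
    intro b h1 h2
    cases b with
    | nil => exact h2
    | cons d v =>
      rcases h1 with h | ⟨he, h⟩ <;> rcases h2 with h' | ⟨he', h'⟩
      · exact absurd h' (lt_asymm h)
      · rw [he'] at h; exact lt_irrefl _ h
      · rw [he] at h'; exact lt_irrefl _ h'
      · exact ih v h h'

lemma wlt_map_range {A : Type*} [LinearOrder A] :
    ∀ (L : ℕ) (f g : ℕ → A) (m : ℕ), m < L → (∀ t < m, f t = g t) → f m < g m →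
      Wlt ((List.range L).map f) ((List.range L).map g) := by
  intro L
  induction L with
  | zero => intro f g m hm; omega
  | succ L ih =>
    intro f g m hm hag hfg
    rw [List.range_succ_eq_map, List.map_cons, List.map_cons, List.map_map, List.map_map]
    cases m with
    | zero => exact Or.inl hfg
    | succ m =>
      refine Or.inr ⟨hag 0 (Nat.succ_pos _), ?_⟩
      exact ih (f ∘ Nat.succ) (g ∘ Nat.succ) m (by omega)
        (fun t ht => hag (t + 1) (by omega)) hfg

lemma x_eq_listAppendInf_prefix {A : Type*} (x : ℕ → A) (L : ℕ) :
    x = listAppendInf ((List.range L).map x) (fun i => x (L + i)) := by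
  funext t
  simp only [listAppendInf, List.length_map, List.length_range]
  split
  · next h => simp
  · next h => show x t = x (L + (t - L)); congr 1; omega

theorem singular_infinite_le_suffixes {A : Type*} [LinearOrder A] (x : ℕ → A)
    (hsym : ∀ s : List A, FactorN x s → FactorN x s.reverse)
    (hsing : SingularInfN x) :
    (∀ n : ℕ, ¬ InfLt (fun i => x (n + i)) x) ∧
    ((¬ ∃ p > 0, ∀ i, x (i + p) = x i) →
      ∀ n > 0, InfLt x (fun i => x (n + i))) := by
  classical
  have part1 : ∀ n : ℕ, ¬ InfLt (fun i => x (n + i)) x := by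
    intro n h
    obtain ⟨m, hag, hlt⟩ := h
    -- the factor q = x[n..n+m]
    have hfac : FactorN x ((List.range (m + 1)).map fun j => x (n + j)) :=
      ⟨n, by simp⟩
    obtain ⟨k, hk⟩ := hsym _ hfac
    have hk' : ((List.range (m + 1)).map fun j => x (n + j)).reverse
        = (List.range (m + 1)).map fun j => x (k + j) := by
      simpa using hk
    -- pointwise content of hk'
    have hpt : ∀ j, j ≤ m → x (k + j) = x (n + (m - j)) := by
      intro j hj
      have hj1 : j < (((List.range (m + 1)).map fun j => x (n + j)).reverse).length := by
        simp; omega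
      have h2 := List.getElem_of_eq hk' hj1
      rw [List.getElem_reverse] at h2
      simp only [List.getElem_map, List.getElem_range, List.length_reverse, List.length_map,
        List.length_range] at h2
      have h3 : m + 1 - 1 - j = m - j := by omega
      rw [h3] at h2
      exact h2.symm
    -- the prefix Y of length L = k+m+1
    set L : ℕ := k + m + 1 with hL
    have hmL : m < L := by omega
    have hYrev : ((List.range L).map x).reverse = (List.range L).map (fun t => x (L - 1 - t)) := by
      apply List.ext_getElem
      · simp
      · intro i h1 h2
        rw [List.getElem_reverse]
        simp
    have hlt2 : Wlt ((List.range L).map x).reverse ((List.range L).map x) := by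
      rw [hYrev]
      apply wlt_map_range L _ _ m hmL
      · intro t ht
        have h1 : L - 1 - t = k + (m - t) := by omega
        rw [h1, hpt (m - t) (by omega)]
        have h2 : m - (m - t) = t := by omega
        rw [h2]
        exact hag t ht
      · have h1 : L - 1 - m = k + 0 := by omega
        rw [h1, hpt 0 (by omega)]
        simpa using hlt
    have hnpal : ((List.range L).map x) ≠ ((List.range L).map x).reverse := by
      intro he
      rw [← he] at hlt2
      exact wlt_asymm_s17 _ _ hlt2 hlt2
    have hne : ((List.range L).map x) ≠ [] := by
      intro hc
      have := congrArg List.length hc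
      simp at this
    have hx : x = listAppendInf ((List.reverse []) ++ (List.range L).map x)
        (fun i => x (L + i)) := by
      simpa using x_eq_listAppendInf_prefix x L
    have ho1 : Wlt ((List.range L).map x) ((List.range L).map x).reverse :=
      (hsing [] _ _ hx hne hnpal).mpr trivial
    exact wlt_asymm_s17 _ _ ho1 hlt2
  refine ⟨part1, ?_⟩
  intro hper n hn
  by_cases hall : ∀ i, x (n + i) = x i
  · exact absurd ⟨n, hn, fun i => by rw [add_comm]; exact hall i⟩ hper
  · push_neg at hall
    have hN : x (n + Nat.find hall) ≠ x (Nat.find hall) := Nat.find_spec hall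
    have hmin : ∀ i < Nat.find hall, x (n + i) = x i := fun i hi =>
      not_not.mp (Nat.find_min hall hi)
    rcases lt_or_gt_of_ne hN with hc | hc
    · exact absurd ⟨Nat.find hall, hmin, hc⟩ (part1 n)
    · exact ⟨Nat.find hall, fun i hi => (hmin i hi).symm, hc⟩
end
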